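/- Let G = (V, E, w) be a weighted hypergraph with positive degrees. For every x ∈ ℝ^V and every y ∈ 𝓛_G(x), one has ⟨x, y⟩_{D⁻¹} = ∑_{e ∈ E} w(e) (max_{u ∈ e} (D⁻¹x)(u) − min_{u ∈ e} (D⁻¹x)(u))² ≥ 0. Consequently, every eigenvalue of 𝓛_G is nonnegative: if λ ∈ ℝ and x ∈ ℝ^V with x ≠ 0 satisfy λx ∈ 𝓛_G(x), then λ ≥ 0. -/

import Mathlib

open Finset
open scoped Classical

structure WHG (V : Type) [Fintype V] [DecidableEq V] where
  E : Type
  [fintypeE : Fintype E]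
  mem : E → Finset V
  mem_nonempty : ∀ e, (mem e).Nonempty
  w : E → ℝ
  w_pos : ∀ e, 0 < w e

namespace WHG

attribute [instance] WHG.fintypeE

variable {V : Type} [Fintype V] [DecidableEq V] (G : WHG V)

/-- Degree of a vertex. -/
noncomputable def deg (v : V) : ℝ := ∑ e : G.E, if v ∈ G.mem e then G.w e else 0

/-- Volume of a vertex set. -/
noncomputable def vol (S : Finset V) : ℝ := ∑ v ∈ S, G.deg v

/-- Euclidean dot product. -/
def dot (x y : V → ℝ) : ℝ := ∑ v, x v * y v

/-- Inner product weighted by `D⁻¹`. -/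
noncomputable def innerD (x y : V → ℝ) : ℝ := ∑ v, x v * y v / G.deg v

/-- Norm associated to `innerD`. -/
noncomputable def normD (x : V → ℝ) : ℝ := Real.sqrt (G.innerD x x)

/-- `D⁻¹ x`. -/
noncomputable def Dinv (x : V → ℝ) : V → ℝ := fun v => x v / G.deg v

/-- Base polytope `B_e`. -/
def base (e : G.E) : Set (V → ℝ) :=
  convexHull ℝ {b : V → ℝ | ∃ u ∈ G.mem e, ∃ v ∈ G.mem e, b = Pi.single u 1 - Pi.single v 1}

/-- Multi-valued hypergraph Laplacian `L_G`. -/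
def Lap (x : V → ℝ) : Set (V → ℝ) :=
  {y | ∃ b : G.E → V → ℝ,
    (∀ e, b e ∈ G.base e ∧ ∀ b' ∈ G.base e, dot b' x ≤ dot (b e) x) ∧
    y = ∑ e : G.E, (G.w e * dot (b e) x) • b e}

/-- Normalized Laplacian `𝓛_G`. -/
noncomputable def nLap (x : V → ℝ) : Set (V → ℝ) := G.Lap (G.Dinv x)

/-- Total weight of hyperedges crossing `S`. -/
noncomputable def cut (S : Finset V) : ℝ :=
  ∑ e : G.E, if (G.mem e ∩ S).Nonempty ∧ (G.mem e \ S).Nonempty then G.w e else 0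

/-- Conductance of a vertex set. -/
noncomputable def cond (S : Finset V) : ℝ := G.cut S / min (G.vol S) (G.vol Sᶜ)

/-- Conductance of the hypergraph. -/
noncomputable def condG : ℝ :=
  sInf {c | ∃ S : Finset V, S.Nonempty ∧ S ≠ Finset.univ ∧ c = G.cond S}

/-- Connectivity of a hypergraph. -/
def Connected : Prop :=
  ∀ S : Finset V, S.Nonempty → S ≠ Finset.univ →
    ∃ e : G.E, (G.mem e ∩ S).Nonempty ∧ (G.mem e \ S).Nonempty

/-- The stationary vector `π`. -/
noncomputable def piVec : V → ℝ := fun v => G.deg v / G.vol Finset.univ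

/-- Solution of the heat equation `(HE; s)`. -/
def IsHeatSol (s : V → ℝ) (ρ : ℝ → V → ℝ) : Prop :=
  (∃ K : NNReal, LipschitzOnWith K ρ (Set.Ici 0)) ∧ ρ 0 = s ∧
  (∀ᵐ t : ℝ ∂MeasureTheory.volume, 0 ≤ t → ∃ y ∈ G.nLap (ρ t), HasDerivAt ρ (-y) t)

/-- Sweep sets of a vector. -/
def sweep (x : V → ℝ) : Set (Finset V) :=
  {S | ∃ τ : ℝ, S = Finset.univ.filter (fun v => τ ≤ x v) ∨
                S = Finset.univ.filter (fun v => x v ≤ τ)}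

/-- `κ_{T,t}`: the least conductance of nontrivial sweep sets of `ρ_ξ`, `ξ ∈ [T,t]`. -/
noncomputable def kappa (ρ : ℝ → V → ℝ) (T t : ℝ) : ℝ :=
  sInf {c | ∃ ξ ∈ Set.Icc T t, ∃ S ∈ sweep (ρ ξ),
    S.Nonempty ∧ S ≠ Finset.univ ∧ c = G.cond S}

/-- The family `𝒢(G, x)` of collapsed weighted graphs. -/
def GraphFamily (x : V → ℝ) (A : Matrix V V ℝ) : Prop :=
  A.IsSymm ∧ (∀ u v, 0 ≤ A u v) ∧ (∀ v, ∑ u, A v u = G.deg v) ∧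
  ∃ w' : G.E → V → V → ℝ,
    (∀ e u v, 0 ≤ w' e u v) ∧
    (∀ e u v, w' e u v ≠ 0 →
      (u ∈ G.mem e ∧ ∀ u' ∈ G.mem e, x u' ≤ x u) ∧
      (v ∈ G.mem e ∧ ∀ v' ∈ G.mem e, x v ≤ x v')) ∧
    (∀ e, ∑ u : V, ∑ v : V, w' e u v = G.w e) ∧
    (∀ u v, u ≠ v → A u v = ∑ e : G.E, (w' e u v + w' e v u))


/-!
For `y ∈ L_G(z)` we have `y = ∑ₑ w(e) (b_eᵀz) b_e` with `b_e` maximising `bᵀz` over `B_e`, hence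
`zᵀy = ∑ₑ w(e) (b_eᵀz)²`. A linear functional on `B_e = conv {𝟙_u - 𝟙_v}` is maximised at a vertex,
so `b_eᵀz = max_e z - min_e z`. Taking `z = D⁻¹x` gives `⟨x, y⟩_{D⁻¹} = zᵀy`. For an eigenpair,
`0 ≤ ⟨x, λx⟩_{D⁻¹} = λ ‖x‖²_{D⁻¹}` with `‖x‖_{D⁻¹} > 0`.
-/

noncomputable def spread (e : G.E) (z : V → ℝ) : ℝ :=
  (G.mem e).sup' (G.mem_nonempty e) z - (G.mem e).inf' (G.mem_nonempty e) z

omit [DecidableEq V] in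
theorem dot_eq_dotProduct (x y : V → ℝ) : dot x y = x ⬝ᵥ y := rfl

theorem dot_single_sub_single (u v : V) (z : V → ℝ) :
    dot (Pi.single u 1 - Pi.single v 1) z = z u - z v := by
  simp only [dot_eq_dotProduct, sub_dotProduct, single_dotProduct, one_mul]

omit [DecidableEq V] in
theorem isLinearMap_dot_left (z : V → ℝ) : IsLinearMap ℝ (fun b : V → ℝ => dot b z) :=
  ⟨fun a b => add_dotProduct a b z, fun c b => smul_dotProduct c b z⟩

theorem single_sub_single_mem_base {e : G.E} {u v : V} (hu : u ∈ G.mem e) (hv : v ∈ G.mem e) :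
    Pi.single u 1 - Pi.single v 1 ∈ G.base e :=
  subset_convexHull ℝ _ ⟨u, hu, v, hv, rfl⟩

theorem dot_le_spread {e : G.E} {b : V → ℝ} (hb : b ∈ G.base e) (z : V → ℝ) :
    dot b z ≤ G.spread e z := by
  refine convexHull_min ?_ (convex_halfSpace_le (isLinearMap_dot_left z) _) hb
  rintro _ ⟨u, hu, v, hv, rfl⟩
  rw [Set.mem_ofPred_eq, dot_single_sub_single]
  exact sub_le_sub (le_sup' z hu) (inf'_le z hv)

theorem exists_mem_base_dot_eq_spread (e : G.E) (z : V → ℝ) :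
    ∃ b ∈ G.base e, dot b z = G.spread e z := by
  obtain ⟨u, hu, hsup⟩ := (G.mem e).exists_mem_eq_sup' (G.mem_nonempty e) z
  obtain ⟨v, hv, hinf⟩ := (G.mem e).exists_mem_eq_inf' (G.mem_nonempty e) z
  refine ⟨_, G.single_sub_single_mem_base hu hv, ?_⟩
  rw [dot_single_sub_single, spread, hsup, hinf]

theorem dot_eq_spread_of_isMax {e : G.E} {b z : V → ℝ} (hb : b ∈ G.base e)
    (hmax : ∀ b' ∈ G.base e, dot b' z ≤ dot b z) : dot b z = G.spread e z := by
  obtain ⟨b', hb', hspread⟩ := G.exists_mem_base_dot_eq_spread e z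
  exact le_antisymm (G.dot_le_spread hb z) (hspread ▸ hmax b' hb')

theorem dot_Lap_self {x y : V → ℝ} (hy : y ∈ G.Lap x) :
    dot y x = ∑ e, G.w e * G.spread e x ^ 2 := by
  obtain ⟨b, hb, rfl⟩ := hy
  rw [dot_eq_dotProduct, sum_dotProduct]
  refine sum_congr rfl fun e _ => ?_
  rw [smul_dotProduct, smul_eq_mul, ← dot_eq_dotProduct, G.dot_eq_spread_of_isMax (hb e).1 (hb e).2]
  ring

theorem sum_mul_spread_sq_nonneg (z : V → ℝ) : 0 ≤ ∑ e, G.w e * G.spread e z ^ 2 :=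
  sum_nonneg fun e _ => mul_nonneg (G.w_pos e).le (sq_nonneg _)

theorem innerD_eq_dot_Dinv (x y : V → ℝ) : G.innerD x y = dot y (G.Dinv x) :=
  sum_congr rfl fun v _ => by rw [Dinv]; ring

theorem innerD_nLap_eq {x y : V → ℝ} (hy : y ∈ G.nLap x) :
    G.innerD x y = ∑ e, G.w e * G.spread e (G.Dinv x) ^ 2 := by
  rw [innerD_eq_dot_Dinv]
  exact G.dot_Lap_self hy

theorem innerD_smul_right (c : ℝ) (x y : V → ℝ) : G.innerD x (c • y) = c * G.innerD x y := by
  simp only [innerD, Pi.smul_apply, smul_eq_mul, mul_sum]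
  exact sum_congr rfl fun v _ => by ring

theorem innerD_self_pos (hd : ∀ v, 0 < G.deg v) {x : V → ℝ} (hx : x ≠ 0) :
    0 < G.innerD x x := by
  obtain ⟨v, hv⟩ := Function.ne_iff.mp hx
  exact sum_pos' (fun u _ => div_nonneg (mul_self_nonneg _) (hd u).le)
    ⟨v, mem_univ v, div_pos (mul_self_pos.mpr hv) (hd v)⟩

/-- `⟨x, y⟩_{D⁻¹}` for `y ∈ 𝓛_G(x)` equals the sum of the weighted
squared spreads of `D⁻¹x` over hyperedges, is nonnegative, and consequently every
eigenvalue of `𝓛_G` is nonnegative. -/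
theorem innerD_nLap_eq_and_eigenvalues_nonneg {V : Type} [Fintype V] [DecidableEq V]
    (G : WHG V) (hd : ∀ v, 0 < G.deg v) :
    (∀ x y : V → ℝ, y ∈ G.nLap x →
      G.innerD x y = ∑ e : G.E, G.w e *
        ((G.mem e).sup' (G.mem_nonempty e) (G.Dinv x)
          - (G.mem e).inf' (G.mem_nonempty e) (G.Dinv x)) ^ 2 ∧
      0 ≤ G.innerD x y) ∧
    (∀ (lam : ℝ) (x : V → ℝ), x ≠ 0 → lam • x ∈ G.nLap x → 0 ≤ lam) := by
  have innerD_nLap_nonneg {x y : V → ℝ} (hy : y ∈ G.nLap x) : 0 ≤ G.innerD x y :=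
    G.innerD_nLap_eq hy ▸ G.sum_mul_spread_sq_nonneg _
  refine ⟨fun x y hy => ⟨G.innerD_nLap_eq hy, innerD_nLap_nonneg hy⟩, fun lam x hx heig => ?_⟩
  have hnonneg := innerD_nLap_nonneg heig
  rw [innerD_smul_right] at hnonneg
  exact nonneg_of_mul_nonneg_left hnonneg (G.innerD_self_pos hd hx)

end WHG
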